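/- For any prime p and integer q coprime to p, |def(p;q,1)| ≤ def evaluated at q = 1, i.e. |def(p;q,1)| ≤ (1/3)(p-1)(p-2), where def(p;q,1) = -4p · Σ_{k=0}^{p-1} ((k/p))·((qk/p)) and ((·)) is the Rademacher sawtooth function. -/

import Mathlib

/-- The Rademacher sawtooth function. -/
noncomputable def sawtooth (z : ℝ) : ℝ :=
  if Int.fract z = 0 then 0 else Int.fract z - 1/2

/-- The signature defect `def(p;q,1) = -4p ∑_{k=0}^{p-1} ((k/p))((qk/p))`. -/
noncomputable def sigDef (p : ℕ) (q : ℤ) : ℝ :=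
  -4 * p * ∑ k ∈ Finset.range p, sawtooth ((k : ℝ) / p) * sawtooth ((q : ℝ) * k / p)

/-!
Since `q` is a unit modulo `p`, the residues `q k mod p` run over the residues `k mod p`, and
`((·))` is `1`-periodic, so `((qk/p))` and `((k/p))` have the same sum of squares over a full
period, namely `(p-1)(p-2)/(12p)`. Summing `|ab| ≤ (a² + b²)/2` termwise bounds
`|∑ ((k/p))((qk/p))|` by that common value.
-/

open Finset

lemma sawtooth_periodic : Function.Periodic sawtooth 1 := fun x => by
  simp [sawtooth]

lemma sawtooth_natCast_div_of_lt {k p : ℕ} (hk : k ≠ 0) (hkp : k < p) :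
    sawtooth (k / p) = k / p - 1 / 2 := by
  have hp : (0 : ℝ) < p := by exact_mod_cast hk.bot_lt.trans hkp
  have hfract : Int.fract ((k : ℝ) / p) = k / p :=
    Int.fract_eq_self.mpr ⟨by positivity, (div_lt_one hp).mpr (by exact_mod_cast hkp)⟩
  simp [sawtooth, hfract, hk, hp.ne']

lemma sum_range_sub_sq (n : ℕ) (c : ℝ) :
    ∑ k ∈ range n, ((k : ℝ) - c) ^ 2 =
      n * (n - 1) * (2 * n - 1) / 6 - c * n * (n - 1) + n * c ^ 2 := by
  induction n with
  | zero => simp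
  | succ n ih => rw [sum_range_succ, ih]; push_cast; ring

lemma sum_range_sawtooth_sq (p : ℕ) :
    ∑ k ∈ range p, sawtooth (k / p) ^ 2 = ((p : ℝ) - 1) * (p - 2) / (12 * p) := by
  rcases p.eq_zero_or_pos with rfl | hp
  · simp
  have hp' : (p : ℝ) ≠ 0 := by positivity
  have hterm : ∀ k ∈ range p,
      sawtooth (k / p) ^ 2 = ((k : ℝ) - p / 2) ^ 2 / p ^ 2 - if k = 0 then 1 / 4 else 0 := by
    intro k hk
    by_cases hk0 : k = 0
    · subst hk0
      simp only [sawtooth, Nat.cast_zero, zero_div, Int.fract_zero, if_true]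
      field_simp
      ring
    · rw [sawtooth_natCast_div_of_lt hk0 (mem_range.mp hk), if_neg hk0]; field_simp; ring
  rw [sum_congr rfl hterm, sum_sub_distrib, ← sum_div, sum_range_sub_sq, sum_ite_eq',
    if_pos (mem_range.mpr hp)]
  field_simp
  ring

lemma Function.Periodic.apply_intCast_div {f : ℝ → ℝ} (hf : f.Periodic 1) (p : ℕ) [NeZero p]
    (m : ℤ) :
    f (m / p) = f ((m : ZMod p).val / p) := by
  have hp : (p : ℝ) ≠ 0 := NeZero.ne _
  have hval : ((m : ZMod p).val : ℝ) = (m % p : ℤ) := by exact_mod_cast ZMod.val_intCast m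
  have hm : (m : ℝ) / p = ((m : ZMod p).val / p : ℝ) + (m / p : ℤ) * 1 := by
    rw [hval]
    field_simp
    exact_mod_cast (Int.emod_add_mul_ediv m p).symm
  rw [hm, hf.int_mul]

lemma sum_range_eq_sum_zmod {M : Type*} [AddCommMonoid M] (p : ℕ) [NeZero p] (g : ZMod p → M) :
    ∑ k ∈ range p, g k = ∑ x, g x := by
  refine sum_nbij' (↑) ZMod.val (by simp) (fun x _ => mem_range.mpr x.val_lt)
    (fun k hk => ZMod.val_cast_of_lt (mem_range.mp hk)) (fun x _ => ZMod.natCast_zmod_val x)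
    (fun _ _ => rfl)

lemma Function.Periodic.sum_range_mul_div {f : ℝ → ℝ} (hf : f.Periodic 1) (p : ℕ) {q : ℤ}
    (hq : IsUnit (q : ZMod p)) :
    ∑ k ∈ range p, f (q * k / p) = ∑ k ∈ range p, f (k / p) := by
  rcases eq_zero_or_neZero p with rfl | _
  · simp
  set g : ZMod p → ℝ := fun x => f (x.val / p)
  have hcast (m : ℤ) : f (m / p) = g m := hf.apply_intCast_div p m
  calc ∑ k ∈ range p, f (q * k / p) = ∑ x : ZMod p, g (q * x) := by
        rw [← sum_range_eq_sum_zmod]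
        refine sum_congr rfl fun k _ => ?_
        exact_mod_cast hcast (q * k)
    _ = ∑ x : ZMod p, g x := Equiv.sum_comp hq.unit.mulLeft g
    _ = ∑ k ∈ range p, f (k / p) := by
        rw [← sum_range_eq_sum_zmod]
        refine sum_congr rfl fun k _ => ?_
        simpa using (hcast k).symm

lemma abs_sum_mul_le {ι : Type*} (s : Finset ι) (f g : ι → ℝ) :
    |∑ i ∈ s, f i * g i| ≤ (∑ i ∈ s, f i ^ 2 + ∑ i ∈ s, g i ^ 2) / 2 := by
  rw [← sum_add_distrib, sum_div]
  refine (abs_sum_le_sum_abs _ _).trans (sum_le_sum fun i _ => ?_)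
  rw [abs_mul, le_div_iff₀ two_pos, ← sq_abs (f i), ← sq_abs (g i)]
  nlinarith [two_mul_le_add_sq |f i| |g i|]

theorem abs_sigDef_le_general (p : ℕ) (q : ℤ) (hq : Int.gcd q p = 1) :
    |sigDef p q| ≤ (1/3) * ((p : ℝ) - 1) * ((p : ℝ) - 2) := by
  rcases p.eq_zero_or_pos with rfl | hp
  · norm_num [sigDef]
  have hunit : IsUnit (q : ZMod p) :=
    (ZMod.coe_int_isUnit_iff_isCoprime q p).mpr (Int.isCoprime_iff_gcd_eq_one.mpr hq).symm
  have hsq :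
      ∑ k ∈ range p, sawtooth (q * k / p) ^ 2 = ∑ k ∈ range p, sawtooth (k / p) ^ 2 :=
    (sawtooth_periodic.comp (· ^ 2)).sum_range_mul_div p hunit
  have hS := abs_sum_mul_le (range p) (fun k => sawtooth (k / p)) (fun k => sawtooth (q * k / p))
  rw [hsq, sum_range_sawtooth_sq, add_self_div_two] at hS
  have hp' : (p : ℝ) ≠ 0 := by positivity
  calc |sigDef p q| = 4 * p * |∑ k ∈ range p, sawtooth (k / p) * sawtooth (q * k / p)| := by
        rw [sigDef, abs_mul, abs_mul, abs_neg, Nat.abs_cast, abs_of_pos four_pos]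
    _ ≤ 4 * p * (((p : ℝ) - 1) * (p - 2) / (12 * p)) := by gcongr
    _ = _ := by field_simp; ring

theorem abs_sigDef_le (p : ℕ) (hp : p.Prime) (q : ℤ) (hq : Int.gcd q p = 1) :
    |sigDef p q| ≤ (1/3) * ((p : ℝ) - 1) * ((p : ℝ) - 2) :=
  abs_sigDef_le_general p q hq
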